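/- arXiv:math/0608135 — 2 statements merged into one kernel-verified Lean document; each statement's English description precedes it below -/
import Mathlib

section
/- The function k ↦ 4k²K(k) ∫_{−K(k)}^{K(k)} cn²(y,k) dy is strictly increasing in k on [1/√2, 1); consequently, the squared L² norm of the ground state φ_μ of −φ'' + μφ − φ³ = 0 on (0,1) with zero boundary conditions is a strictly increasing function of μ. -/
open Real Set Filter intervalIntegral

/-- The complete elliptic integral of the first kind. -/
noncomputable def Kell (k : ℝ) : ℝ :=
  ∫ θ in (0:ℝ)..(π/2), 1 / Real.sqrt (1 - k^2 * (Real.sin θ)^2)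

/-- The function appearing in the formula ‖φ_μ‖₂² = 4k²K(k)∫_{−K(k)}^{K(k)} cn²(y,k)dy. -/
noncomputable def Fnorm (cn : ℝ → ℝ → ℝ) (k : ℝ) : ℝ :=
  4 * k^2 * Kell k * ∫ y in (-(Kell k))..(Kell k), (cn y k)^2

/-!
For `k² < 1` the map `F(θ) = ∫₀^θ dt / Δ(t)`, `Δ(t) = √(1 - k² sin² t)`, is an increasing bijection
of `ℝ`, and its inverse, the amplitude `am`, makes `(cos am, -sin am · Δ(am))` a solution of the
Jacobi equation written as a first-order system. Solutions with `cn(0) = 1`, `cn'(0) = 0` stay in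
`[-1, 1]` by conservation of energy, where the system is Lipschitz, so uniqueness gives
`cn = cos ∘ am`. Substituting `y = F(θ)` turns `∫_{-K}^{K} cn²` into `∫_{-π/2}^{π/2} cos² θ / Δ(θ) dθ`.
Hence the function is `4k²` times two positive integrals of the form `∫ g / Δ`, which increase with
`k` because `Δ` decreases. Composing with the increasing `k(μ)` gives the statement about `φ_μ`.
-/

noncomputable section

variable {k : ℝ}

def ellipticDelta (k θ : ℝ) : ℝ := √(1 - k ^ 2 * sin θ ^ 2)

lemma one_sub_sq_mul_sin_sq_pos (hk : k ^ 2 < 1) (θ : ℝ) : 0 < 1 - k ^ 2 * sin θ ^ 2 := by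
  nlinarith [sin_sq_le_one θ, sq_nonneg k, sq_nonneg (sin θ)]

lemma ellipticDelta_pos (hk : k ^ 2 < 1) (θ : ℝ) : 0 < ellipticDelta k θ :=
  sqrt_pos.2 (one_sub_sq_mul_sin_sq_pos hk θ)

lemma sq_ellipticDelta (hk : k ^ 2 < 1) (θ : ℝ) : ellipticDelta k θ ^ 2 = 1 - k ^ 2 * sin θ ^ 2 :=
  sq_sqrt (one_sub_sq_mul_sin_sq_pos hk θ).le

lemma ellipticDelta_le_one (θ : ℝ) : ellipticDelta k θ ≤ 1 :=
  sqrt_le_one.2 (sub_le_self _ (by positivity))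

lemma ellipticDelta_le_of_sq_le {k₁ k₂ : ℝ} (hk : k₁ ^ 2 ≤ k₂ ^ 2) (θ : ℝ) :
    ellipticDelta k₂ θ ≤ ellipticDelta k₁ θ := by
  unfold ellipticDelta
  gcongr

lemma ellipticDelta_neg (θ : ℝ) : ellipticDelta k (-θ) = ellipticDelta k θ := by
  simp [ellipticDelta]

lemma continuous_ellipticDelta : Continuous (ellipticDelta k) := by
  unfold ellipticDelta
  fun_prop

lemma continuous_div_ellipticDelta (hk : k ^ 2 < 1) {g : ℝ → ℝ} (hg : Continuous g) :
    Continuous fun θ => g θ / ellipticDelta k θ :=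
  hg.div continuous_ellipticDelta fun θ => (ellipticDelta_pos hk θ).ne'

lemma hasDerivAt_ellipticDelta (hk : k ^ 2 < 1) (θ : ℝ) :
    HasDerivAt (ellipticDelta k) (-(k ^ 2 * sin θ * cos θ) / ellipticDelta k θ) θ := by
  have h := (((hasDerivAt_sin θ).fun_pow 2).const_mul (k ^ 2)).const_sub 1
    |>.sqrt (one_sub_sq_mul_sin_sq_pos hk θ).ne'
  refine (h : HasDerivAt (ellipticDelta k) _ θ).congr_deriv ?_
  have := (ellipticDelta_pos hk θ).ne'
  simp only [ellipticDelta, Nat.cast_ofNat] at this ⊢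
  field_simp
  ring

def ellipticF (k θ : ℝ) : ℝ := ∫ t in 0..θ, 1 / ellipticDelta k t

lemma Kell_eq_ellipticF : Kell k = ellipticF k (π / 2) := rfl

lemma hasDerivAt_ellipticF (hk : k ^ 2 < 1) (θ : ℝ) :
    HasDerivAt (ellipticF k) (1 / ellipticDelta k θ) θ :=
  ((continuous_div_ellipticDelta hk continuous_const).integral_hasStrictDerivAt 0 θ).hasDerivAt

lemma strictMono_ellipticF (hk : k ^ 2 < 1) : StrictMono (ellipticF k) :=
  strictMono_of_hasDerivAt_pos (hasDerivAt_ellipticF hk) fun θ =>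
    one_div_pos.2 (ellipticDelta_pos hk θ)

lemma ellipticF_zero : ellipticF k 0 = 0 := integral_same

lemma ellipticF_neg (θ : ℝ) : ellipticF k (-θ) = -ellipticF k θ := by
  calc ∫ t in 0..-θ, 1 / ellipticDelta k t = ∫ t in 0..-θ, 1 / ellipticDelta k (-t) := by
        simp only [ellipticDelta_neg]
    _ = ∫ t in θ..0, 1 / ellipticDelta k t := by
        simpa using integral_comp_neg (a := 0) (b := -θ) fun t => 1 / ellipticDelta k t
    _ = -ellipticF k θ := integral_symm _ _

lemma monotone_ellipticF_sub_id (hk : k ^ 2 < 1) : Monotone fun θ => ellipticF k θ - θ :=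
  monotone_of_hasDerivAt_nonneg (fun θ => (hasDerivAt_ellipticF hk θ).sub (hasDerivAt_id θ))
    fun θ => sub_nonneg.2 ((one_le_div (ellipticDelta_pos hk θ)).2 (ellipticDelta_le_one θ))

lemma surjective_ellipticF (hk : k ^ 2 < 1) : Function.Surjective (ellipticF k) := by
  have hmono := monotone_ellipticF_sub_id hk
  refine (continuous_iff_continuousAt.2 fun θ => (hasDerivAt_ellipticF hk θ).continuousAt)
    |>.surjective ?_ ?_
  · refine tendsto_atTop_mono' _ (eventually_atTop.2 ⟨0, fun θ hθ => ?_⟩) tendsto_id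
    simpa [ellipticF_zero] using hmono hθ
  · refine tendsto_atBot_mono' _ (eventually_atBot.2 ⟨0, fun θ hθ => ?_⟩) tendsto_id
    simpa [ellipticF_zero] using hmono hθ

def jacobiAm (k : ℝ) : ℝ → ℝ := Function.invFun (ellipticF k)

lemma jacobiAm_ellipticF (hk : k ^ 2 < 1) (θ : ℝ) : jacobiAm k (ellipticF k θ) = θ :=
  Function.leftInverse_invFun (strictMono_ellipticF hk).injective θ

lemma ellipticF_jacobiAm (hk : k ^ 2 < 1) (y : ℝ) : ellipticF k (jacobiAm k y) = y :=
  Function.rightInverse_invFun (surjective_ellipticF hk) y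

lemma jacobiAm_zero (hk : k ^ 2 < 1) : jacobiAm k 0 = 0 := by
  simpa [ellipticF_zero] using jacobiAm_ellipticF hk 0

lemma continuous_jacobiAm (hk : k ^ 2 < 1) : Continuous (jacobiAm k) := by
  refine Monotone.continuous_of_surjective (fun y₁ y₂ h => ?_)
    fun θ => ⟨_, jacobiAm_ellipticF hk θ⟩
  rwa [← (strictMono_ellipticF hk).le_iff_le, ellipticF_jacobiAm hk, ellipticF_jacobiAm hk]

lemma hasDerivAt_jacobiAm (hk : k ^ 2 < 1) (y : ℝ) :
    HasDerivAt (jacobiAm k) (ellipticDelta k (jacobiAm k y)) y := by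
  simpa using HasDerivAt.of_local_left_inverse (continuous_jacobiAm hk).continuousAt
    (hasDerivAt_ellipticF hk (jacobiAm k y)) (one_div_pos.2 (ellipticDelta_pos hk _)).ne'
    (.of_forall (ellipticF_jacobiAm hk))

def jacobiRhs (k x : ℝ) : ℝ := (2 * k ^ 2 - 1) * x - 2 * k ^ 2 * x ^ 3

def jacobiField (k : ℝ) (p : ℝ × ℝ) : ℝ × ℝ := (p.2, jacobiRhs k p.1)

lemma abs_jacobiRhs_sub_le (hk : k ^ 2 ≤ 1) {x y : ℝ} (hx : x ^ 2 ≤ 1) (hy : y ^ 2 ≤ 1) :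
    |jacobiRhs k x - jacobiRhs k y| ≤ 5 * |x - y| := by
  have hfactor : jacobiRhs k x - jacobiRhs k y
      = (2 * k ^ 2 - 1 - 2 * k ^ 2 * (x ^ 2 + x * y + y ^ 2)) * (x - y) := by
    unfold jacobiRhs; ring
  have hxy : 0 ≤ x ^ 2 + x * y + y ^ 2 ∧ x ^ 2 + x * y + y ^ 2 ≤ 3 :=
    ⟨by nlinarith [sq_nonneg (x + y)], by nlinarith [sq_nonneg (x - y)]⟩
  rw [hfactor, abs_mul]
  gcongr
  rw [abs_le]
  constructor <;> nlinarith [sq_nonneg k]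

lemma lipschitzOnWith_jacobiField (hk : k ^ 2 ≤ 1) :
    LipschitzOnWith 5 (jacobiField k) {p | p.1 ^ 2 ≤ 1} := by
  refine LipschitzOnWith.of_dist_le_mul fun p hp q hq => ?_
  simp only [jacobiField, Prod.dist_eq, Real.dist_eq, NNReal.coe_ofNat]
  refine max_le ?_ ?_
  · nlinarith [le_max_right |p.1 - q.1| |p.2 - q.2|, abs_nonneg (p.2 - q.2)]
  · nlinarith [le_max_left |p.1 - q.1| |p.2 - q.2|, abs_jacobiRhs_sub_le hk hp hq]

section solution

variable {c : ℝ → ℝ} (hc : ContDiff ℝ 2 c) (hode : ∀ y, deriv (deriv c) y = jacobiRhs k (c y))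
include hc hode

lemma hasDerivAt_jacobi_state (t : ℝ) :
    HasDerivAt (fun t => (c t, deriv c t)) (jacobiField k (c t, deriv c t)) t := by
  have h := (hc.differentiable two_ne_zero t).hasDerivAt.prodMk
    (hc.differentiable_deriv_two t).hasDerivAt
  rwa [hode t] at h

lemma sq_le_one_of_jacobi_ode (hc0 : c 0 = 1) (hc0' : deriv c 0 = 0) (y : ℝ) : c y ^ 2 ≤ 1 := by
  set E : ℝ → ℝ := fun y => deriv c y ^ 2 - (2 * k ^ 2 - 1) * c y ^ 2 + k ^ 2 * c y ^ 4
  have hE : ∀ t, HasDerivAt E 0 t := fun t => by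
    have hd := (hc.differentiable two_ne_zero t).hasDerivAt
    have hd' := (hc.differentiable_deriv_two t).hasDerivAt
    refine (((hd'.fun_pow 2).sub ((hd.fun_pow 2).const_mul _)).add
      ((hd.fun_pow 4).const_mul _)).congr_deriv ?_
    rw [hode t, jacobiRhs]
    ring
  have hEy : E y = E 0 :=
    is_const_of_deriv_eq_zero (fun t => (hE t).differentiableAt) (fun t => (hE t).deriv) y 0
  simp only [E, hc0, hc0'] at hEy
  by_contra! hy
  have hpos : 0 < 1 + k ^ 2 * (c y ^ 2 - 1) := by nlinarith [sq_nonneg k]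
  nlinarith [mul_pos (sub_pos.2 hy) hpos, sq_nonneg (deriv c y)]

end solution

lemma hasDerivAt_cos_jacobiAm_state (hk : k ^ 2 < 1) (y : ℝ) :
    HasDerivAt (fun y => (cos (jacobiAm k y), -sin (jacobiAm k y) * ellipticDelta k (jacobiAm k y)))
      (jacobiField k (cos (jacobiAm k y), -sin (jacobiAm k y) * ellipticDelta k (jacobiAm k y)))
      y := by
  have ham := hasDerivAt_jacobiAm hk y
  set θ := jacobiAm k y
  have hsin : HasDerivAt (fun y => -sin (jacobiAm k y) * ellipticDelta k (jacobiAm k y))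
      (jacobiRhs k (cos θ)) y := by
    refine (((hasDerivAt_sin θ).neg.mul (hasDerivAt_ellipticDelta hk θ)).comp y ham).congr_deriv ?_
    have hΔ := (ellipticDelta_pos hk θ).ne'
    simp only [jacobiRhs, Pi.neg_apply]
    field_simp
    linear_combination (-cos θ) * sq_ellipticDelta hk θ + 2 * k ^ 2 * cos θ * sin_sq_add_cos_sq θ
  exact ((hasDerivAt_cos θ).comp y ham).prodMk hsin

theorem eq_cos_jacobiAm_of_jacobi_ode (hk : k ^ 2 < 1) {c : ℝ → ℝ} (hc : ContDiff ℝ 2 c)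
    (hode : ∀ y, deriv (deriv c) y = jacobiRhs k (c y)) (hc0 : c 0 = 1) (hc0' : deriv c 0 = 0) :
    c = fun y => cos (jacobiAm k y) := by
  have hstate := ODE_solution_unique_univ (v := fun _ => jacobiField k) (t₀ := 0)
    (fun _ => lipschitzOnWith_jacobiField hk.le)
    (fun t => ⟨hasDerivAt_jacobi_state hc hode t, sq_le_one_of_jacobi_ode hc hode hc0 hc0' t⟩)
    (fun t => ⟨hasDerivAt_cos_jacobiAm_state hk t, cos_sq_le_one _⟩)
    (by simp [jacobiAm_zero hk, hc0, hc0'])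
  exact funext fun y => congrArg Prod.fst (congrFun hstate y)

lemma integral_cos_jacobiAm_sq (hk : k ^ 2 < 1) :
    ∫ y in -Kell k..Kell k, cos (jacobiAm k y) ^ 2 =
      ∫ θ in -(π / 2)..π / 2, cos θ ^ 2 / ellipticDelta k θ := by
  rw [Kell_eq_ellipticF, ← ellipticF_neg,
    ← integral_comp_mul_deriv (g := fun y => cos (jacobiAm k y) ^ 2)
      (fun θ _ => hasDerivAt_ellipticF hk θ)
      (continuous_div_ellipticDelta hk continuous_const).continuousOn
      ((continuous_cos.comp (continuous_jacobiAm hk)).pow 2)]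
  refine integral_congr fun θ _ => ?_
  simp only [Function.comp_apply, jacobiAm_ellipticF hk]
  ring

lemma Fnorm_eq {cn : ℝ → ℝ → ℝ} (hk : k ^ 2 < 1) (hreg : ContDiff ℝ 2 fun y => cn y k)
    (hode : ∀ y, deriv (deriv fun y => cn y k) y = jacobiRhs k (cn y k))
    (hcn0 : cn 0 k = 1) (hcn0' : deriv (fun y => cn y k) 0 = 0) :
    Fnorm cn k = 4 * k ^ 2 * Kell k * ∫ θ in -(π / 2)..π / 2, cos θ ^ 2 / ellipticDelta k θ := by
  have hcn := eq_cos_jacobiAm_of_jacobi_ode hk hreg hode hcn0 hcn0'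
  rw [Fnorm, ← integral_cos_jacobiAm_sq hk]
  simp only [fun y => congrFun hcn y]

lemma integral_div_ellipticDelta_pos (hk : k ^ 2 < 1) {g : ℝ → ℝ} (hg : Continuous g)
    {a b : ℝ} (hab : a < b) (hpos : ∀ θ ∈ Ioo a b, 0 < g θ) :
    0 < ∫ θ in a..b, g θ / ellipticDelta k θ :=
  intervalIntegral_pos_of_pos_on ((continuous_div_ellipticDelta hk hg).intervalIntegrable a b)
    (fun θ hθ => div_pos (hpos θ hθ) (ellipticDelta_pos hk θ)) hab

lemma integral_div_ellipticDelta_le_of_sq_le {k₁ k₂ : ℝ} (hk : k₁ ^ 2 ≤ k₂ ^ 2) (hk₂ : k₂ ^ 2 < 1)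
    {g : ℝ → ℝ} (hg : Continuous g) {a b : ℝ} (hab : a ≤ b) (hnonneg : ∀ θ ∈ Icc a b, 0 ≤ g θ) :
    ∫ θ in a..b, g θ / ellipticDelta k₁ θ ≤ ∫ θ in a..b, g θ / ellipticDelta k₂ θ := by
  have hk₁ := hk.trans_lt hk₂
  refine integral_mono_on hab ((continuous_div_ellipticDelta hk₁ hg).intervalIntegrable a b)
    ((continuous_div_ellipticDelta hk₂ hg).intervalIntegrable a b) fun θ hθ => ?_
  exact div_le_div_of_nonneg_left (hnonneg θ hθ) (ellipticDelta_pos hk₂ θ)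
    (ellipticDelta_le_of_sq_le hk θ)

lemma strictMonoOn_Fnorm {cn : ℝ → ℝ → ℝ} (hreg : ∀ k, ContDiff ℝ 2 fun y => cn y k)
    (hode : ∀ k y, deriv (deriv fun y => cn y k) y = jacobiRhs k (cn y k))
    (hcn0 : ∀ k, cn 0 k = 1) (hcn0' : ∀ k, deriv (fun y => cn y k) 0 = 0) :
    StrictMonoOn (Fnorm cn) (Ico 0 1) := by
  intro k₁ ⟨hk₁0, hk₁1⟩ k₂ ⟨_, hk₂1⟩ hlt
  have hsq : k₁ ^ 2 < k₂ ^ 2 := pow_lt_pow_left₀ hlt hk₁0 two_ne_zero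
  have hk₂ : k₂ ^ 2 < 1 := pow_lt_one₀ (hk₁0.trans hlt.le) hk₂1 two_ne_zero
  have hk₁ := hsq.trans hk₂
  rw [Fnorm_eq hk₁ (hreg k₁) (hode k₁) (hcn0 k₁) (hcn0' k₁),
    Fnorm_eq hk₂ (hreg k₂) (hode k₂) (hcn0 k₂) (hcn0' k₂)]
  have hK : 0 < Kell k₁ :=
    integral_div_ellipticDelta_pos hk₁ continuous_const (by positivity) fun _ _ => one_pos
  have hG : 0 < ∫ θ in -(π / 2)..π / 2, cos θ ^ 2 / ellipticDelta k₁ θ :=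
    integral_div_ellipticDelta_pos hk₁ (continuous_cos.pow 2) (by linarith [pi_pos])
      fun θ hθ => pow_pos (cos_pos_of_mem_Ioo hθ) 2
  have hKle : Kell k₁ ≤ Kell k₂ :=
    integral_div_ellipticDelta_le_of_sq_le hsq.le hk₂ continuous_const (by positivity)
      fun _ _ => zero_le_one
  have hGle : ∫ θ in -(π / 2)..π / 2, cos θ ^ 2 / ellipticDelta k₁ θ ≤
      ∫ θ in -(π / 2)..π / 2, cos θ ^ 2 / ellipticDelta k₂ θ :=
    integral_div_ellipticDelta_le_of_sq_le hsq.le hk₂ (continuous_cos.pow 2) (by linarith [pi_pos])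
      fun θ _ => sq_nonneg (cos θ)
  have hK₂ := hK.trans_le hKle
  calc 4 * k₁ ^ 2 * Kell k₁ * _ < 4 * k₂ ^ 2 * Kell k₁ * _ := by gcongr
    _ ≤ _ := by gcongr

end

theorem ground_state_L2_norm_strictMono_general
    (cn : ℝ → ℝ → ℝ)
    -- cn(·,k) is the Jacobi elliptic cosine: the solution of the Jacobi ODE
    -- cn'' = (2k²−1)cn − 2k²cn³ with cn(0,k) = 1, cn'(0,k) = 0.
    (hcn_reg : ∀ k : ℝ, ContDiff ℝ 2 (fun y => cn y k))
    (hcn_ode : ∀ k y : ℝ,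
      deriv (deriv (fun y => cn y k)) y = (2*k^2 - 1) * cn y k - 2*k^2 * (cn y k)^3)
    (hcn0 : ∀ k : ℝ, cn 0 k = 1)
    (hcn0' : ∀ k : ℝ, deriv (fun y => cn y k) 0 = 0)
    (φ : ℝ → ℝ → ℝ)
    (kfun : ℝ → ℝ)
    (hk_mem : ∀ μ : ℝ, 0 < μ → kfun μ ∈ Set.Ico (1 / Real.sqrt 2) 1)
    (hk_mono : StrictMonoOn kfun (Set.Ioi 0))
    (hnorm : ∀ μ : ℝ, 0 < μ →
      (∫ x in (0:ℝ)..1, (φ μ x)^2) = Fnorm cn (kfun μ)) :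
    StrictMonoOn (Fnorm cn) (Set.Ico (1 / Real.sqrt 2) 1) ∧
    StrictMonoOn (fun μ => ∫ x in (0:ℝ)..1, (φ μ x)^2) (Set.Ioi 0) := by
  have hFnorm : StrictMonoOn (Fnorm cn) (Ico (1 / √2) 1) :=
    (strictMonoOn_Fnorm hcn_reg hcn_ode hcn0 hcn0').mono (Ico_subset_Ico_left (by positivity))
  refine ⟨hFnorm, fun μ₁ hμ₁ μ₂ hμ₂ hlt => ?_⟩
  simp only [hnorm μ₁ hμ₁, hnorm μ₂ hμ₂]
  exact hFnorm (hk_mem μ₁ hμ₁) (hk_mem μ₂ hμ₂) (hk_mono hμ₁ hμ₂ hlt)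

/-- The map k ↦ 4k²K(k)∫_{−K(k)}^{K(k)} cn²(y,k)dy is strictly increasing on [1/√2, 1);
consequently the squared L²-norm of the ground state φ_μ is strictly increasing in μ. -/
theorem ground_state_L2_norm_strictMono
    (cn : ℝ → ℝ → ℝ)
    -- cn(·,k) is the Jacobi elliptic cosine: the solution of the Jacobi ODE
    -- cn'' = (2k²−1)cn − 2k²cn³ with cn(0,k) = 1, cn'(0,k) = 0.
    (hcn_reg : ∀ k : ℝ, ContDiff ℝ 2 (fun y => cn y k))
    (hcn_ode : ∀ k y : ℝ,
      deriv (deriv (fun y => cn y k)) y = (2*k^2 - 1) * cn y k - 2*k^2 * (cn y k)^3)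
    (hcn0 : ∀ k : ℝ, cn 0 k = 1)
    (hcn0' : ∀ k : ℝ, deriv (fun y => cn y k) 0 = 0)
    (φ : ℝ → ℝ → ℝ)
    -- φ μ is the positive ground state of −φ'' + μφ − φ³ = 0 with Dirichlet conditions
    (hφ : ∀ μ : ℝ, 0 < μ →
      ContDiff ℝ 2 (φ μ) ∧ φ μ 0 = 0 ∧ φ μ 1 = 0 ∧
      ∀ x ∈ Set.Ioo (0:ℝ) 1,
        0 < φ μ x ∧ -(deriv (deriv (φ μ)) x) + μ * φ μ x - (φ μ x)^3 = 0)
    (kfun : ℝ → ℝ)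
    (hk_mem : ∀ μ : ℝ, 0 < μ → kfun μ ∈ Set.Ico (1 / Real.sqrt 2) 1)
    (hk_mono : StrictMonoOn kfun (Set.Ioi 0))
    (hnorm : ∀ μ : ℝ, 0 < μ →
      (∫ x in (0:ℝ)..1, (φ μ x)^2) = Fnorm cn (kfun μ)) :
    StrictMonoOn (Fnorm cn) (Set.Ico (1 / Real.sqrt 2) 1) ∧
    StrictMonoOn (fun μ => ∫ x in (0:ℝ)..1, (φ μ x)^2) (Set.Ioi 0) :=
  ground_state_L2_norm_strictMono_general cn hcn_reg hcn_ode hcn0 hcn0' φ kfun hk_mem hk_mono hnorm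
end

section
/- Let φ be the positive ground state and η ∈ H¹₀(0,1) orthogonal in L² to φ³. Then ⟨L₊η, η⟩ = ∫₀¹(η'² + μη² − 3φ²η²)dx ≥ 0, where L₊ = −d²/dx² + μ − 3φ² with Dirichlet boundary conditions. -/
/-!
Write `Q(u) = ∫₀¹ (u'² + μu²)` and perturb the minimizer along η. The Euler–Lagrange equation gives
`Q(w) = λ` and, since `∫ w³η = 0`, kills the cross term, so `Q(w + tη) = λ + t² Q(η)`, while
`∫ (w + tη)⁴ = 1 + 6t² ∫ w²η² + O(t³)`. Rescaling `w + tη` onto the constraint set and comparing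
with the minimum gives `λ √(∫ (w + tη)⁴) ≤ λ + t² Q(η)`; comparing the `t²` coefficients as
`t → 0⁺` yields `Q(η) ≥ 3λ ∫ w²η² = 3 ∫ φ²η²`.
-/

open Real Set intervalIntegral Filter Topology

/-- Membership in H¹₀(0,1), modelled by C¹ functions vanishing at the endpoints. -/
def H10 (u : ℝ → ℝ) : Prop := ContDiff ℝ 1 u ∧ u 0 = 0 ∧ u 1 = 0

lemma nonneg_of_eventually_nonneg_quadratic {p q r : ℝ}
    (h : ∀ᶠ t in 𝓝[>] (0 : ℝ), 0 ≤ p + q * t + r * t ^ 2) : 0 ≤ p := by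
  have hcont : Continuous fun t : ℝ => p + q * t + r * t ^ 2 := by fun_prop
  have hlim := (hcont.tendsto 0).mono_left (nhdsWithin_le_nhds (s := Ioi 0))
  simpa using ge_of_tendsto hlim h

lemma three_mul_le_of_sq_mul_quartic_le {lam C b c d : ℝ} (hlam : 0 < lam)
    (h : ∀ t : ℝ, 0 < t → 0 < 1 + 6 * b * t ^ 2 + 4 * c * t ^ 3 + d * t ^ 4 →
      lam ^ 2 * (1 + 6 * b * t ^ 2 + 4 * c * t ^ 3 + d * t ^ 4) ≤ (lam + C * t ^ 2) ^ 2) :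
    3 * lam * b ≤ C := by
  have hN : ∀ᶠ t in 𝓝 (0 : ℝ), 0 < 1 + 6 * b * t ^ 2 + 4 * c * t ^ 3 + d * t ^ 4 :=
    (by fun_prop : Continuous fun t : ℝ => 1 + 6 * b * t ^ 2 + 4 * c * t ^ 3 + d * t ^ 4)
      |>.continuousAt.eventually (eventually_gt_nhds (by norm_num))
  -- `t²` times this quadratic is `(λ + Ct²)² - λ² (1 + 6bt² + 4ct³ + dt⁴)`
  have hquad : ∀ᶠ t in 𝓝[>] (0 : ℝ), 0 ≤ (2 * lam * C - 6 * lam ^ 2 * b)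
      + (-4 * lam ^ 2 * c) * t + (C ^ 2 - lam ^ 2 * d) * t ^ 2 := by
    filter_upwards [nhdsWithin_le_nhds hN, self_mem_nhdsWithin] with t hNt (ht : 0 < t)
    refine nonneg_of_mul_nonneg_right ?_ (pow_pos ht 2)
    linear_combination h t ht hNt
  nlinarith [nonneg_of_eventually_nonneg_quadratic hquad]

namespace H10

lemma add {u v : ℝ → ℝ} (hu : H10 u) (hv : H10 v) : H10 fun x => u x + v x :=
  ⟨hu.1.add hv.1, by simp [hu.2.1, hv.2.1], by simp [hu.2.2, hv.2.2]⟩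

lemma const_mul {u : ℝ → ℝ} (c : ℝ) (hu : H10 u) : H10 fun x => c * u x :=
  ⟨contDiff_const.mul hu.1, by simp [hu.2.1], by simp [hu.2.2]⟩

end H10

/-- `Q(u) = 2 J(u)`, the quadratic form of `-d²/dx² + μ`. -/
noncomputable def energy (μ : ℝ) (u : ℝ → ℝ) : ℝ :=
  ∫ x in (0 : ℝ)..1, ((deriv u x) ^ 2 + μ * (u x) ^ 2)

noncomputable def energyPairing (μ : ℝ) (u v : ℝ → ℝ) : ℝ :=
  ∫ x in (0 : ℝ)..1, (deriv u x * deriv v x + μ * u x * v x)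

lemma energy_const_mul (μ c : ℝ) (u : ℝ → ℝ) :
    energy μ (fun x => c * u x) = c ^ 2 * energy μ u := by
  rw [energy, energy, ← integral_const_mul, deriv_const_mul_field']
  exact integral_congr fun x _ => by ring

lemma energy_add_const_mul (μ t : ℝ) {u v : ℝ → ℝ} (hu : ContDiff ℝ 1 u) (hv : ContDiff ℝ 1 v) :
    energy μ (fun x => u x + t * v x) =
      energy μ u + 2 * t * energyPairing μ u v + t ^ 2 * energy μ v := by
  have hu' := hu.continuous_deriv le_rfl
  have hv' := hv.continuous_deriv le_rfl
  have hu₀ := hu.continuous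
  have hv₀ := hv.continuous
  have hderiv : deriv (fun x => u x + t * v x) = fun x => deriv u x + t * deriv v x := by
    ext x
    rw [deriv_fun_add (hu.differentiable one_ne_zero x)
      ((hv.differentiable one_ne_zero x).const_mul t), deriv_const_mul_field']
  rw [energy, energy, energy, energyPairing, hderiv, ← integral_const_mul, ← integral_const_mul,
    ← integral_add (by apply Continuous.intervalIntegrable; fun_prop)
      (by apply Continuous.intervalIntegrable; fun_prop),
    ← integral_add (by apply Continuous.intervalIntegrable; fun_prop)
      (by apply Continuous.intervalIntegrable; fun_prop)]
  exact integral_congr fun x _ => by ring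

lemma integral_add_const_mul_pow_four (t : ℝ) {u v : ℝ → ℝ} (hu : Continuous u)
    (hv : Continuous v) :
    ∫ x in (0 : ℝ)..1, (u x + t * v x) ^ 4 =
      (∫ x in (0 : ℝ)..1, u x ^ 4) + 4 * t * (∫ x in (0 : ℝ)..1, u x ^ 3 * v x)
        + 6 * t ^ 2 * (∫ x in (0 : ℝ)..1, u x ^ 2 * v x ^ 2)
        + 4 * t ^ 3 * (∫ x in (0 : ℝ)..1, u x * v x ^ 3)
        + t ^ 4 * (∫ x in (0 : ℝ)..1, v x ^ 4) := by
  simp only [← integral_const_mul]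
  repeat rw [← integral_add (by apply Continuous.intervalIntegrable; fun_prop)
    (by apply Continuous.intervalIntegrable; fun_prop)]
  exact integral_congr fun x _ => by ring

lemma energy_mul_sqrt_le_of_isMinimizer {μ : ℝ} {w u : ℝ → ℝ}
    (hmin : ∀ v : ℝ → ℝ, H10 v → ∫ x in (0 : ℝ)..1, v x ^ 4 = 1 → energy μ w ≤ energy μ v)
    (hu : H10 u) (hpos : 0 < ∫ x in (0 : ℝ)..1, u x ^ 4) :
    energy μ w * √(∫ x in (0 : ℝ)..1, u x ^ 4) ≤ energy μ u := by
  set Q := ∫ x in (0 : ℝ)..1, u x ^ 4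
  set r := √(√Q)
  have hr : 0 < r := sqrt_pos.2 (sqrt_pos.2 hpos)
  have hr2 : r ^ 2 = √Q := sq_sqrt (sqrt_nonneg Q)
  have hr4 : r ^ 4 = Q := by rw [show 4 = 2 * 2 from rfl, pow_mul, hr2, sq_sqrt hpos.le]
  have hscaled : ∫ x in (0 : ℝ)..1, (r⁻¹ * u x) ^ 4 = 1 := by
    simp only [mul_pow, integral_const_mul, inv_pow, hr4]
    exact inv_mul_cancel₀ hpos.ne'
  have h := hmin _ (hu.const_mul r⁻¹) hscaled
  rw [energy_const_mul, inv_pow, hr2, ← div_eq_inv_mul, le_div_iff₀ (sqrt_pos.2 hpos)] at h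
  exact h

theorem three_mul_integral_sq_mul_sq_le_energy {μ lam : ℝ} {w η : ℝ → ℝ} (hlam : 0 < lam)
    (hw : H10 w) (hη : H10 η)
    (hmin : ∀ u : ℝ → ℝ, H10 u → ∫ x in (0 : ℝ)..1, u x ^ 4 = 1 → energy μ w ≤ energy μ u)
    (hconstraint : ∫ x in (0 : ℝ)..1, w x ^ 4 = 1) (henergy : energy μ w = lam)
    (hpair : energyPairing μ w η = 0) (horth : ∫ x in (0 : ℝ)..1, w x ^ 3 * η x = 0) :
    3 * lam * (∫ x in (0 : ℝ)..1, w x ^ 2 * η x ^ 2) ≤ energy μ η := by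
  refine three_mul_le_of_sq_mul_quartic_le (c := ∫ x in (0 : ℝ)..1, w x * η x ^ 3)
    (d := ∫ x in (0 : ℝ)..1, η x ^ 4) hlam fun t _ hN => ?_
  have hquartic := integral_add_const_mul_pow_four t hw.1.continuous hη.1.continuous
  rw [hconstraint, horth] at hquartic
  have hpos : 0 < ∫ x in (0 : ℝ)..1, (w x + t * η x) ^ 4 := by rw [hquartic]; linarith
  have h := energy_mul_sqrt_le_of_isMinimizer hmin (hw.add (hη.const_mul t)) hpos
  rw [energy_add_const_mul μ t hw.1 hη.1, henergy, hpair] at h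
  have hsq := pow_le_pow_left₀ (by positivity) h 2
  rw [mul_pow, sq_sqrt hpos.le, hquartic] at hsq
  linarith

lemma integral_Lplus_form_eq {μ lam : ℝ} {w φ η : ℝ → ℝ} (hlam : 0 ≤ lam)
    (hφ : ∀ x, φ x = √lam * w x) (hw : H10 w) (hη : H10 η) :
    ∫ x in (0 : ℝ)..1, ((deriv η x) ^ 2 + μ * (η x) ^ 2 - 3 * (φ x) ^ 2 * (η x) ^ 2) =
      energy μ η - 3 * lam * ∫ x in (0 : ℝ)..1, w x ^ 2 * η x ^ 2 := by
  have := hw.1.continuous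
  have := hη.1.continuous
  have := hη.1.continuous_deriv le_rfl
  rw [energy, ← integral_const_mul, ← integral_sub
    (by apply Continuous.intervalIntegrable; fun_prop)
    (by apply Continuous.intervalIntegrable; fun_prop)]
  exact integral_congr fun x _ => by rw [hφ, mul_pow, sq_sqrt hlam]; ring

theorem Lplus_form_nonneg_on_orthogonal_general (μ lam : ℝ)
    (hlam : 0 < lam) (w φ : ℝ → ℝ)
    (hw : H10 w)
    (hconstraint : (∫ x in (0:ℝ)..1, (w x)^4) = 1)
    -- w minimizes J[u] = (1/2)∫₀¹(u'² + μu²) on {∫u⁴ = 1}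
    (hmin : ∀ u : ℝ → ℝ, H10 u → (∫ x in (0:ℝ)..1, (u x)^4) = 1 →
      (1/2) * (∫ x in (0:ℝ)..1, ((deriv w x)^2 + μ * (w x)^2)) ≤
      (1/2) * (∫ x in (0:ℝ)..1, ((deriv u x)^2 + μ * (u x)^2)))
    -- Euler–Lagrange equation with Lagrange multiplier lam
    (hEL : ∀ v : ℝ → ℝ, H10 v →
      (∫ x in (0:ℝ)..1, (deriv w x * deriv v x + μ * w x * v x)) =
        lam * ∫ x in (0:ℝ)..1, (w x)^3 * v x)
    -- the ground state φ = λ^{1/2} w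
    (hφ : ∀ x : ℝ, φ x = Real.sqrt lam * w x)
    (η : ℝ → ℝ) (hη : H10 η)
    -- η is orthogonal to φ³ in L²
    (horth : (∫ x in (0:ℝ)..1, η x * (φ x)^3) = 0) :
    0 ≤ ∫ x in (0:ℝ)..1,
      ((deriv η x)^2 + μ * (η x)^2 - 3 * (φ x)^2 * (η x)^2) := by
  have hwη : ∫ x in (0 : ℝ)..1, w x ^ 3 * η x = 0 := by
    have h : ∫ x in (0 : ℝ)..1, η x * φ x ^ 3 = √lam ^ 3 * ∫ x in (0 : ℝ)..1, w x ^ 3 * η x := by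
      rw [← integral_const_mul]
      exact integral_congr fun x _ => by rw [hφ]; ring
    exact (mul_eq_zero.mp (h ▸ horth)).resolve_left (by positivity)
  have henergy : energy μ w = lam := by
    have h := hEL w hw
    rw [integral_congr fun x _ => show w x ^ 3 * w x = w x ^ 4 by ring, hconstraint,
      mul_one] at h
    exact (integral_congr fun x _ => by ring).trans h
  have hpair : energyPairing μ w η = 0 := by
    rw [energyPairing, hEL η hη, hwη, mul_zero]
  have key := three_mul_integral_sq_mul_sq_le_energy hlam hw hη
    (fun u hu h => by have := hmin u hu h; rw [energy, energy]; linarith)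
    hconstraint henergy hpair hwη
  rw [integral_Lplus_form_eq hlam.le hφ hw hη]
  linarith

/-- If η ∈ H¹₀(0,1) is L²-orthogonal to φ³, then the quadratic form of
L₊ = −d²/dx² + μ − 3φ² is nonnegative at η. -/
theorem Lplus_form_nonneg_on_orthogonal (μ lam : ℝ) (hμ : -(π^2) < μ)
    (hlam : 0 < lam) (w φ : ℝ → ℝ)
    (hw : H10 w) (hwpos : ∀ x ∈ Set.Ioo (0:ℝ) 1, 0 < w x)
    (hconstraint : (∫ x in (0:ℝ)..1, (w x)^4) = 1)
    -- w minimizes J[u] = (1/2)∫₀¹(u'² + μu²) on {∫u⁴ = 1}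
    (hmin : ∀ u : ℝ → ℝ, H10 u → (∫ x in (0:ℝ)..1, (u x)^4) = 1 →
      (1/2) * (∫ x in (0:ℝ)..1, ((deriv w x)^2 + μ * (w x)^2)) ≤
      (1/2) * (∫ x in (0:ℝ)..1, ((deriv u x)^2 + μ * (u x)^2)))
    -- Euler–Lagrange equation with Lagrange multiplier lam
    (hEL : ∀ v : ℝ → ℝ, H10 v →
      (∫ x in (0:ℝ)..1, (deriv w x * deriv v x + μ * w x * v x)) =
        lam * ∫ x in (0:ℝ)..1, (w x)^3 * v x)
    -- the ground state φ = λ^{1/2} w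
    (hφ : ∀ x : ℝ, φ x = Real.sqrt lam * w x)
    (η : ℝ → ℝ) (hη : H10 η)
    -- η is orthogonal to φ³ in L²
    (horth : (∫ x in (0:ℝ)..1, η x * (φ x)^3) = 0) :
    0 ≤ ∫ x in (0:ℝ)..1,
      ((deriv η x)^2 + μ * (η x)^2 - 3 * (φ x)^2 * (η x)^2) :=
  Lplus_form_nonneg_on_orthogonal_general μ lam hlam w φ hw hconstraint hmin hEL hφ η hη horth
end
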